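/- Suppose √d has continued fraction expansion with even period length k = 2l and palindromic period (a₁, …, a_{l−1}, a_l, a_{l−1}, …, a₁, 2a₀). Then q_{l−1} divides q_{k−2} + (−1)^{l−1}. -/

import Mathlib

/-!
Write `K(a_i, …, a_j)` for the continuant, so that `q_n = K(a_1, …, a_n)`. Splitting
`q_{2l-2}` after position `l - 1` gives
`q_{2l-2} = q_{l-1} K(a_l, …, a_{2l-2}) + q_{l-2} K(a_{l+1}, …, a_{2l-2})`.
Continuants are invariant under reversal, so the palindrome turns the two right-hand factors
into `K(a_2, …, a_l)` and `K(a_2, …, a_{l-1})`, and the determinant identity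
`q_{l-2} K(a_2, …, a_{l-1}) ≡ (-1)^l  (mod q_{l-1})` finishes the proof.
-/

/-- Iteration of the Gauss-type map producing the complete quotients of the
continued fraction expansion of `α`. -/
noncomputable def cfIter (α : ℝ) : ℕ → ℝ
  | 0 => α
  | n + 1 => (Int.fract (cfIter α n))⁻¹

/-- The `n`-th partial quotient of the continued fraction of `α`. -/
noncomputable def cfTerm (α : ℝ) (n : ℕ) : ℤ := ⌊cfIter α n⌋

/-- `t` is an eventual period of the sequence `f`. -/
def EvPeriod (t : ℕ) (f : ℕ → ℤ) : Prop := ∃ N, ∀ n, N ≤ n → f (n + t) = f n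

/-- `periodLen α` is the length of the periodic part of the continued fraction
expansion of `α`: the least positive eventual period of its partial quotients. -/
noncomputable def periodLen (α : ℝ) : ℕ := sInf {t | 0 < t ∧ EvPeriod t (cfTerm α)}

/-- Numerators `p_k` of the convergents of the continued fraction `[a 0; a 1, a 2, …]`. -/
def convP (a : ℕ → ℤ) : ℕ → ℤ
  | 0 => a 0
  | 1 => a 0 * a 1 + 1
  | n + 2 => a (n + 2) * convP a (n + 1) + convP a n

/-- Denominators `q_k` of the convergents of the continued fraction `[a 0; a 1, a 2, …]`. -/
def convQ (a : ℕ → ℤ) : ℕ → ℤ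
  | 0 => 1
  | 1 => a 1
  | n + 2 => a (n + 2) * convQ a (n + 1) + convQ a n

/-- The continuant `K(a_i, a_{i+1}, …, a_{i+n-1})` of the `n` terms of `a` starting at `i`. -/
def continuant (a : ℕ → ℤ) (i : ℕ) : ℕ → ℤ
  | 0 => 1
  | 1 => a i
  | n + 2 => a (i + n + 1) * continuant a i (n + 1) + continuant a i n

namespace continuant

variable (a : ℕ → ℤ)

theorem convQ_eq : ∀ n, convQ a n = continuant a 1 n
  | 0 => rfl
  | 1 => rfl
  | n + 2 => by
    rw [convQ, continuant, convQ_eq n, convQ_eq (n + 1), show 1 + n + 1 = n + 2 by omega]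

theorem add_add_two (i m : ℕ) : ∀ n, continuant a i (m + n + 2) =
    continuant a i (m + 1) * continuant a (i + m + 1) (n + 1) +
      continuant a i m * continuant a (i + m + 2) n
  | 0 => by simp only [continuant]; ring_nf
  | 1 => by simp only [continuant]; ring_nf
  | n + 2 => by
    have h := add_add_two i m n
    have h' := add_add_two i m (n + 1)
    rw [show m + (n + 2) + 2 = (m + n + 2) + 2 from rfl, continuant,
      show m + n + 2 + 1 = m + (n + 1) + 2 by ring, h', h]
    simp only [continuant]
    ring_nf

theorem add_two_left (i n : ℕ) :
    continuant a i (n + 2) = a i * continuant a (i + 1) (n + 1) + continuant a (i + 2) n := by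
  simpa [continuant] using add_add_two a i 0 n

theorem eq_of_reverse (b : ℕ → ℤ) : ∀ n i i', (∀ j < n, a (i + j) = b (i' + (n - 1 - j))) →
    continuant a i n = continuant b i' n
  | 0, _, _, _ => rfl
  | 1, i, i', h => by simpa [continuant] using h 0 one_pos
  | n + 2, i, i', h => by
    have last : a (i + n + 1) = b i' := by simpa [add_assoc] using h (n + 1) (by omega)
    have init₁ : continuant a i (n + 1) = continuant b (i' + 1) (n + 1) :=
      eq_of_reverse b (n + 1) i (i' + 1) fun j hj => by
        rw [h j (by omega)]; congr 1; omega
    have init₂ : continuant a i n = continuant b (i' + 2) n :=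
      eq_of_reverse b n i (i' + 2) fun j hj => by
        rw [h j (by omega)]; congr 1; omega
    rw [continuant, add_two_left, last, init₁, init₂]

theorem det (i : ℕ) : ∀ n, continuant a i (n + 2) * continuant a (i + 1) n -
    continuant a i (n + 1) * continuant a (i + 1) (n + 1) = (-1) ^ n
  | 0 => by simp only [continuant]; ring
  | n + 1 => by
    have e : continuant a (i + 1) (n + 2) =
        a (i + n + 2) * continuant a (i + 1) (n + 1) + continuant a (i + 1) n := by
      simp only [continuant, show i + 1 + n + 1 = i + n + 2 by omega]
    rw [continuant, e]
    linear_combination -det i n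

theorem dvd_mul_sub_neg_one_pow (i n : ℕ) :
    continuant a i (n + 1) ∣ continuant a i n * continuant a (i + 1) n - (-1) ^ n := by
  cases n with
  | zero => simp [continuant]
  | succ n =>
    refine ⟨continuant a (i + 1) n, ?_⟩
    linear_combination -det a i n

end continuant

open continuant in
theorem stmt11_general (l : ℕ) (a : ℕ → ℤ)
    (hpal : ∀ i, 1 ≤ i → i ≤ 2 * l - 1 → a i = a (2 * l - i)) :
    convQ a (l - 1) ∣ convQ a (2 * l - 2) + (-1) ^ (l - 1) := by
  rcases Nat.lt_or_ge l 2 with hl | hl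
  · rw [show l - 1 = 0 by omega]
    exact one_dvd _
  obtain ⟨m, rfl⟩ := Nat.exists_eq_add_of_le' hl
  have split := add_add_two a 1 m m
  have rev₁ : continuant a (m + 2) (m + 1) = continuant a 2 (m + 1) :=
    eq_of_reverse a a (m + 1) (m + 2) 2 fun j hj => by
      rw [hpal _ (by omega) (by omega)]; congr 1; omega
  have rev₂ : continuant a (m + 3) m = continuant a 2 m :=
    eq_of_reverse a a m (m + 3) 2 fun j hj => by
      rw [hpal _ (by omega) (by omega)]; congr 1; omega
  rw [show 1 + m + 1 = m + 2 by ring, show 1 + m + 2 = m + 3 by ring, rev₁, rev₂] at split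
  obtain ⟨c, hc⟩ := dvd_mul_sub_neg_one_pow a 1 m
  rw [show m + 2 - 1 = m + 1 by omega, show 2 * (m + 2) - 2 = m + m + 2 by omega,
    convQ_eq, convQ_eq, split]
  refine ⟨continuant a 2 (m + 1) + c, ?_⟩
  linear_combination hc

/-- If `√d` has even period `k = 2l` with palindromic period, then
`q (l-1)` divides `q (k-2) + (-1)^(l-1)`. -/
theorem stmt11 (d : ℕ) (hd : 0 < d) (hsq : ¬ IsSquare d) (l : ℕ) (hl : 1 ≤ l)
    (a : ℕ → ℤ) (ha : a = cfTerm (Real.sqrt d))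
    (hper : periodLen (Real.sqrt d) = 2 * l)
    (hperiodic : ∀ n, 1 ≤ n → a (n + 2 * l) = a n)
    (hpal : ∀ i, 1 ≤ i → i ≤ 2 * l - 1 → a i = a (2 * l - i))
    (hlast : a (2 * l) = 2 * a 0) :
    convQ a (l - 1) ∣ convQ a (2 * l - 2) + (-1) ^ (l - 1) :=
  stmt11_general l a hpal
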